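/- Let p and q be positive integers and let N_{p,q} be the additive subgroup of ℤ × ℤ generated by (p, 0) and (−q, 2q). Then the minimum over all characters χ of A = (ℤ × ℤ)/N_{p,q} of |χ(v₁) + χ(v₂) + χ(v₁)χ(v₂)|² equals min{ g((2π/p)·⌊p/3⌋), g((2π/p)·⌈p/3⌉) }, where v₁ and v₂ are the images in A of (1,0) and (0,1). In particular this minimum is independent of q. -/

import Mathlib

/-! Writing `z = χ v₁` and `w = χ v₂`, the quantity is `‖z + w (1 + z)‖ ≥ |‖1 + z‖ - 1|`.
Since `z ^ p = 1`, `z = exp (2πik/p)` and `‖1 + z‖ = 2 |cos (πk/p)|`; the function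
`(2 cos x - 1)²` decreases on `[0, π/3]` and increases on `[π/3, π]`, so over the admissible `k`
it is smallest at `k = ⌊p/3⌋` or `k = ⌈p/3⌉`. Equality is attained by `z = exp (iθ)`,
`w = -exp (iθ/2)`, for which `w (1 + z) = -2 cos (θ/2) z`; as `w² = z`, this pair kills `(-q, 2q)`
for every `q`, so it defines a character of `A`. -/

open Real

noncomputable def gFun (θ : ℝ) : ℝ := 3 + 2 * cos θ - 4 * cos (θ / 2)

lemma gFun_eq_sq (θ : ℝ) : gFun θ = (2 * cos (θ / 2) - 1) ^ 2 := by
  have h := cos_two_mul (θ / 2)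
  rw [mul_div_cancel₀ θ two_ne_zero] at h
  rw [gFun, h]; ring

lemma gFun_two_pi_div_mul (p x : ℝ) :
    gFun (2 * π / p * x) = (2 * cos (π * x / p) - 1) ^ 2 := by
  rw [gFun_eq_sq]; ring_nf

lemma one_add_exp_mul_I (θ : ℝ) :
    1 + Complex.exp (θ * Complex.I) =
      2 * (cos (θ / 2) : ℂ) * Complex.exp ((θ / 2 : ℝ) * Complex.I) := by
  push_cast
  rw [Complex.two_cos, add_mul, ← Complex.exp_add, ← Complex.exp_add]
  ring_nf
  simp [add_comm]

lemma norm_one_add_exp_mul_I (θ : ℝ) :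
    ‖1 + Complex.exp (θ * Complex.I)‖ = 2 * |cos (θ / 2)| := by
  rw [one_add_exp_mul_I, norm_mul, Complex.norm_exp_ofReal_mul_I, norm_mul,
    Complex.norm_real]
  simp

lemma sq_norm_one_add_sub_one_le {z w : ℂ} (hz : ‖z‖ = 1) (hw : ‖w‖ = 1) :
    (‖1 + z‖ - 1) ^ 2 ≤ ‖z + w + z * w‖ ^ 2 := by
  have h := abs_norm_sub_norm_le (w * (1 + z)) (-z)
  rw [norm_mul, hw, one_mul, norm_neg, hz,
    show w * (1 + z) - -z = z + w + z * w by ring] at h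
  exact sq_le_sq' (abs_le.mp h).1 (abs_le.mp h).2

lemma sq_norm_exp_add_exp_add_mul_eq_gFun (θ : ℝ) :
    let z := Complex.exp (θ * Complex.I)
    let w := Complex.exp ((θ / 2 + π : ℝ) * Complex.I)
    ‖z + w + z * w‖ ^ 2 = gFun θ := by
  intro z w
  have hw : w = -Complex.exp ((θ / 2 : ℝ) * Complex.I) := by
    simp only [w]; push_cast; rw [add_mul, Complex.exp_add, Complex.exp_pi_mul_I]; ring
  have hsum : z + w + z * w = (1 - 2 * cos (θ / 2) : ℝ) * z := by
    rw [show z + w + z * w = z + w * (1 + z) by ring, one_add_exp_mul_I, hw]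
    simp only [z]; push_cast
    rw [show ((θ : ℂ) * Complex.I) = (θ / 2 : ℂ) * Complex.I + (θ / 2 : ℂ) * Complex.I by ring,
      Complex.exp_add]; ring
  rw [hsum, norm_mul, Complex.norm_real, Complex.norm_exp_ofReal_mul_I, mul_one,
    Real.norm_eq_abs, sq_abs, gFun_eq_sq]
  ring

lemma antitoneOn_sq_two_mul_cos_sub_one :
    AntitoneOn (fun x => (2 * cos x - 1) ^ 2) (Set.Icc 0 (π / 3)) := by
  rintro x ⟨hx0, hx⟩ y ⟨hy0, hy⟩ hxy
  have h1 : cos y ≤ cos x := cos_le_cos_of_nonneg_of_le_pi hx0 (by linarith [pi_pos]) hxy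
  have h2 : cos (π / 3) ≤ cos y := cos_le_cos_of_nonneg_of_le_pi hy0 (by linarith [pi_pos]) hy
  rw [cos_pi_div_three] at h2
  dsimp only
  nlinarith

lemma monotoneOn_sq_two_mul_cos_sub_one :
    MonotoneOn (fun x => (2 * cos x - 1) ^ 2) (Set.Icc (π / 3) π) := by
  rintro x ⟨hx0, hx⟩ y ⟨hy0, hy⟩ hxy
  have h1 : cos y ≤ cos x := cos_le_cos_of_nonneg_of_le_pi (by linarith [pi_pos]) hy hxy
  have h2 : cos x ≤ cos (π / 3) := cos_le_cos_of_nonneg_of_le_pi (by linarith [pi_pos]) hx hx0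
  rw [cos_pi_div_three] at h2
  dsimp only
  nlinarith

lemma min_gFun_floor_ceil_le {p : ℕ} (hp : 0 < p) {m : ℕ} (hm : 2 * m ≤ p) :
    min (gFun (2 * π / p * (⌊(p : ℝ) / 3⌋ : ℤ))) (gFun (2 * π / p * (⌈(p : ℝ) / 3⌉ : ℤ)))
      ≤ (2 * cos (π * m / p) - 1) ^ 2 := by
  have hp' : (0 : ℝ) < p := by exact_mod_cast hp
  have hm' : (2 * m : ℝ) ≤ p := by exact_mod_cast hm
  have hpi := pi_pos
  simp only [gFun_two_pi_div_mul]
  have hscale {x y : ℝ} (h : x ≤ y) : π * x / p ≤ π * y / p := by gcongr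
  have hthird : π * ((p : ℝ) / 3) / p = π / 3 := by field_simp
  have hhalf : π * ((p : ℝ) / 2) / p ≤ π := by field_simp; linarith
  rcases le_or_gt (m : ℤ) ⌊(p : ℝ) / 3⌋ with hle | hgt
  · apply min_le_of_left_le
    have hfloor : (⌊(p : ℝ) / 3⌋ : ℝ) ≤ p / 3 := Int.floor_le _
    have hmle : (m : ℝ) ≤ ⌊(p : ℝ) / 3⌋ := by exact_mod_cast hle
    refine antitoneOn_sq_two_mul_cos_sub_one ⟨by positivity, ?_⟩
      ⟨by positivity, hthird ▸ hscale hfloor⟩ (hscale hmle)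
    exact hthird ▸ hscale (hmle.trans hfloor)
  · apply min_le_of_right_le
    have hceil : (p : ℝ) / 3 ≤ ⌈(p : ℝ) / 3⌉ := Int.le_ceil _
    have hmge : (⌈(p : ℝ) / 3⌉ : ℝ) ≤ m := by
      exact_mod_cast (Int.ceil_le_floor_add_one _).trans hgt
    have hmpi : π * m / p ≤ π := (hscale (by linarith)).trans hhalf
    refine monotoneOn_sq_two_mul_cos_sub_one ⟨hthird ▸ hscale hceil, ?_⟩
      ⟨hthird ▸ hscale (hceil.trans hmge), hmpi⟩ (hscale hmge)
    exact (hscale hmge).trans hmpi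

lemma exists_abs_cos_eq_cos {p i : ℕ} (hi : i ≤ p) :
    ∃ m : ℕ, 2 * m ≤ p ∧ |cos (π * i / p)| = cos (π * m / p) := by
  rcases Nat.eq_zero_or_pos p with rfl | hp
  · exact ⟨0, le_rfl, by simp⟩
  have hp' : (0 : ℝ) < p := by exact_mod_cast hp
  have hcos_nonneg {m : ℕ} (hm : 2 * m ≤ p) : 0 ≤ cos (π * m / p) := by
    have hm' : (2 * m : ℝ) ≤ p := by exact_mod_cast hm
    refine cos_nonneg_of_mem_Icc ⟨by linarith [pi_pos, show 0 ≤ π * m / p by positivity], ?_⟩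
    rw [div_le_iff₀ hp']; nlinarith [pi_pos]
  rcases le_or_gt (2 * i) p with h | h
  · exact ⟨i, h, abs_of_nonneg (hcos_nonneg h)⟩
  · refine ⟨p - i, by omega, ?_⟩
    have hrefl : π * i / p = π - π * ((p - i : ℕ) : ℝ) / p := by
      rw [Nat.cast_sub hi]; field_simp; ring
    rw [hrefl, cos_pi_sub, abs_neg, abs_of_nonneg (hcos_nonneg (by omega))]

lemma min_gFun_floor_ceil_le_sq_norm {p : ℕ} (hp : 0 < p) {z w : ℂ} (hz : z ^ p = 1)
    (hw : ‖w‖ = 1) :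
    min (gFun (2 * π / p * (⌊(p : ℝ) / 3⌋ : ℤ))) (gFun (2 * π / p * (⌈(p : ℝ) / 3⌉ : ℤ)))
      ≤ ‖z + w + z * w‖ ^ 2 := by
  have : NeZero p := ⟨hp.ne'⟩
  obtain ⟨i, hi, rfl⟩ := (Complex.isPrimitiveRoot_exp p hp.ne').eq_pow_of_pow_eq_one hz
  have hexp : Complex.exp (2 * π * Complex.I / p) ^ i
      = Complex.exp ((2 * π * i / p : ℝ) * Complex.I) := by
    rw [← Complex.exp_nat_mul]; push_cast; ring_nf
  obtain ⟨m, hm, hcos⟩ := exists_abs_cos_eq_cos hi.le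
  calc _ ≤ (2 * cos (π * m / p) - 1) ^ 2 := min_gFun_floor_ceil_le hp hm
    _ = (‖1 + Complex.exp ((2 * π * i / p : ℝ) * Complex.I)‖ - 1) ^ 2 := by
      rw [norm_one_add_exp_mul_I, ← hcos]; ring_nf
    _ ≤ _ := by rw [hexp]; exact sq_norm_one_add_sub_one_le (Complex.norm_exp_ofReal_mul_I _) hw

lemma pow_eq_one_of_nsmul_eq_zero {G : Type*} [AddMonoid G] {χ : G → ℂ}
    (hχ : ∀ x y, χ (x + y) = χ x * χ y) (hnorm : ∀ x, ‖χ x‖ = 1) {x : G} {n : ℕ}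
    (hx : n • x = 0) : χ x ^ n = 1 := by
  have h0 : χ 0 = 1 := by
    have hne : χ 0 ≠ 0 := norm_ne_zero_iff.mp (by simp [hnorm])
    exact mul_left_cancel₀ hne (by rw [mul_one, ← hχ, add_zero])
  let ψ : AddChar G ℂ := ⟨χ, h0, hχ⟩
  calc χ x ^ n = ψ (n • x) := (ψ.map_nsmul_eq_pow n x).symm
    _ = 1 := by rw [hx, ψ.map_zero_eq_one]


lemma exists_char_quotient_closure (s : Set (ℤ × ℤ)) (z w : Circle)
    (hs : ∀ x ∈ s, z ^ x.1 * w ^ x.2 = 1) :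
    ∃ χ : (ℤ × ℤ) ⧸ AddSubgroup.closure s → ℂ,
      (∀ x y, χ (x + y) = χ x * χ y) ∧ (∀ x, ‖χ x‖ = 1) ∧
      χ (QuotientAddGroup.mk (1, 0)) = z ∧ χ (QuotientAddGroup.mk (0, 1)) = w := by
  let φ : ℤ × ℤ →+ Additive Circle :=
    (zmultiplesHom _ (Additive.ofMul z)).coprod (zmultiplesHom _ (Additive.ofMul w))
  have hφ (x : ℤ × ℤ) : (φ x).toMul = z ^ x.1 * w ^ x.2 := by simp [φ]
  have hker : AddSubgroup.closure s ≤ φ.ker :=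
    (AddSubgroup.closure_le _).mpr fun x hx => by
      rw [SetLike.mem_coe, AddMonoidHom.mem_ker, ← toMul_eq_one, hφ, hs x hx]
  refine ⟨fun x => (QuotientAddGroup.lift _ φ hker x).toMul, fun x y => ?_,
    fun x => Circle.norm_coe _, ?_, ?_⟩
  · simp
  · simp [hφ]
  · simp [hφ]

lemma exp_zpow_mul_exp_half_add_pi_zpow_eq_one {p q : ℕ} (hp : p ≠ 0) (K : ℤ) {x : ℤ × ℤ}
    (hx : x ∈ ({((p : ℤ), (0 : ℤ)), (-(q : ℤ), 2 * (q : ℤ))} : Set (ℤ × ℤ))) :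
    let θ := 2 * π / p * K
    Circle.exp θ ^ x.1 * Circle.exp (θ / 2 + π) ^ x.2 = 1 := by
  intro θ
  have hp' : (p : ℝ) ≠ 0 := by exact_mod_cast hp
  rcases hx with rfl | rfl
  · rw [zpow_zero, mul_one, ← Circle.exp_intCast_mul, ← Circle.exp_two_pi_mul_int K]
    congr 1; push_cast; simp only [θ]; field_simp
  · rw [← Circle.exp_intCast_mul, ← Circle.exp_intCast_mul, ← Circle.exp_add,
      ← Circle.exp_two_pi_mul_int q]
    congr 1; push_cast; ring

theorem stmt_18_general (p q : ℕ) (hp : 0 < p) :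
    let N : AddSubgroup (ℤ × ℤ) :=
      AddSubgroup.closure {((p : ℤ), (0 : ℤ)), (-(q : ℤ), 2 * (q : ℤ))}
    let A := (ℤ × ℤ) ⧸ N
    let v₁ : A := QuotientAddGroup.mk (1, 0)
    let v₂ : A := QuotientAddGroup.mk (0, 1)
    IsLeast
      {t : ℝ | ∃ χ : A → ℂ,
        (∀ x y, χ (x + y) = χ x * χ y) ∧ (∀ x, ‖χ x‖ = 1) ∧
        t = ‖χ v₁ + χ v₂ + χ v₁ * χ v₂‖ ^ 2}
      (min (gFun (2 * π / p * (⌊(p : ℝ) / 3⌋ : ℤ)))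
           (gFun (2 * π / p * (⌈(p : ℝ) / 3⌉ : ℤ)))) := by
  intro N A v₁ v₂
  constructor
  · obtain ⟨K, hK⟩ : ∃ K : ℤ, gFun (2 * π / p * K) =
        min (gFun (2 * π / p * (⌊(p : ℝ) / 3⌋ : ℤ))) (gFun (2 * π / p * (⌈(p : ℝ) / 3⌉ : ℤ))) :=
      (min_choice _ _).elim (fun h => ⟨_, h.symm⟩) (fun h => ⟨_, h.symm⟩)
    obtain ⟨χ, hχ, hnorm, hv₁, hv₂⟩ := exists_char_quotient_closure _ _ _
      (fun _ hx => exp_zpow_mul_exp_half_add_pi_zpow_eq_one hp.ne' K hx)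
    exact ⟨χ, hχ, hnorm, by rw [hv₁, hv₂, Circle.coe_exp, Circle.coe_exp,
      sq_norm_exp_add_exp_add_mul_eq_gFun, hK]⟩
  · rintro t ⟨χ, hχ, hnorm, rfl⟩
    have hv₁ : p • v₁ = 0 := (QuotientAddGroup.eq_zero_iff _).mpr
      (AddSubgroup.subset_closure (by simp))
    exact min_gFun_floor_ceil_le_sq_norm hp (pow_eq_one_of_nsmul_eq_zero hχ hnorm hv₁) (hnorm v₂)

/-- Let `p, q` be positive integers and `N_{p,q} ≤ ℤ × ℤ` the subgroup
generated by `(p, 0)` and `(−q, 2q)`. The minimum over all characters `χ` of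
`A = (ℤ × ℤ)/N_{p,q}` of `|χ(v₁) + χ(v₂) + χ(v₁)χ(v₂)|²`, where `v₁, v₂` are the
images in `A` of `(1,0)` and `(0,1)`, equals
`min{ g((2π/p)·⌊p/3⌋), g((2π/p)·⌈p/3⌉) }`; in particular it is independent of `q`. -/
theorem stmt_18 (p q : ℕ) (hp : 0 < p) (hq : 0 < q) :
    let N : AddSubgroup (ℤ × ℤ) :=
      AddSubgroup.closure {((p : ℤ), (0 : ℤ)), (-(q : ℤ), 2 * (q : ℤ))}
    let A := (ℤ × ℤ) ⧸ N
    let v₁ : A := QuotientAddGroup.mk (1, 0)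
    let v₂ : A := QuotientAddGroup.mk (0, 1)
    IsLeast
      {t : ℝ | ∃ χ : A → ℂ,
        (∀ x y, χ (x + y) = χ x * χ y) ∧ (∀ x, ‖χ x‖ = 1) ∧
        t = ‖χ v₁ + χ v₂ + χ v₁ * χ v₂‖ ^ 2}
      (min (gFun (2 * π / p * (⌊(p : ℝ) / 3⌋ : ℤ)))
           (gFun (2 * π / p * (⌈(p : ℝ) / 3⌉ : ℤ)))) :=
  stmt_18_general p q hp
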